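/- arXiv:2503.07814 — 5 statements merged into one kernel-verified Lean document; each statement's English description precedes it below -/
import Mathlib

section
/- For every ε > 0, the function h_ε : ℝ² → ℝ is twice continuously differentiable on all of ℝ² (in particular, the two defining pieces match together with their first and second derivatives on the sphere ‖v‖₂ = ε). -/
/-- The Huber-type smoothing of the Euclidean norm on ℝ². -/
noncomputable def huber (ε : ℝ) (v : EuclideanSpace ℝ (Fin 2)) : ℝ :=
  if ‖v‖ < ε then 3 / (4 * ε) * ‖v‖ ^ 2 - 1 / (8 * ε ^ 3) * ‖v‖ ^ 4
  else ‖v‖ - 3 * ε / 8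

open Asymptotics Filter Set

/-- If `f` pointwise coincides with one of two functions that share the same
value and derivative at `a`, then `f` has that derivative at `a`. -/
lemma choice_hasDerivAt {f p q : ℝ → ℝ} {a d : ℝ}
    (hp : HasDerivAt p d a) (hq : HasDerivAt q d a)
    (hpa : p a = f a) (hqa : q a = f a)
    (hch : ∀ t, f t = p t ∨ f t = q t) : HasDerivAt f d a := by
  rw [hasDerivAt_iff_isLittleO] at hp hq ⊢
  have h1 := hp.norm_left.add hq.norm_left
  refine IsBigO.trans_isLittleO ?_ h1
  apply Asymptotics.isBigO_of_le
  intro t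
  have hnn : (0:ℝ) ≤ ‖p t - p a - (t - a) • d‖ + ‖q t - q a - (t - a) • d‖ := by positivity
  rw [Real.norm_of_nonneg hnn]
  rcases hch t with h | h
  · rw [h, ← hpa]; exact le_add_of_nonneg_right (norm_nonneg _)
  · rw [h, ← hqa]; exact le_add_of_nonneg_left (norm_nonneg _)

lemma choice_continuousAt {f p q : ℝ → ℝ} {a : ℝ}
    (hp : ContinuousAt p a) (hq : ContinuousAt q a)
    (hpa : p a = f a) (hqa : q a = f a)
    (hch : ∀ t, f t = p t ∨ f t = q t) : ContinuousAt f a := by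
  rw [ContinuousAt, tendsto_iff_dist_tendsto_zero]
  have hbig : Tendsto (fun t => dist (p t) (f a) + dist (q t) (f a)) (nhds a) (nhds 0) := by
    have h1 : Tendsto (fun t => dist (p t) (f a)) (nhds a) (nhds 0) := by
      have := hp.dist (continuousAt_const (y := f a))
      simpa [hpa] using this
    have h2 : Tendsto (fun t => dist (q t) (f a)) (nhds a) (nhds 0) := by
      have := hq.dist (continuousAt_const (y := f a))
      simpa [hqa] using this
    simpa using h1.add h2
  refine squeeze_zero (fun t => dist_nonneg) (fun t => ?_) hbig
  rcases hch t with h | h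
  · rw [h]; exact le_add_of_nonneg_right dist_nonneg
  · rw [h]; exact le_add_of_nonneg_left dist_nonneg


/-- For every `ε > 0`, the Huber-type function `h_ε` is twice continuously
differentiable on all of `ℝ²`. -/
theorem stmt_0 (ε : ℝ) (hε : 0 < ε) : ContDiff ℝ 2 (huber ε) := by
  have hε' : ε ≠ 0 := hε.ne'
  set b : ℝ := ε ^ 2 with hbdef
  have hb : 0 < b := by positivity
  have hsb : Real.sqrt b = ε := Real.sqrt_sq hε.le
  -- the pieces and their derivatives
  set P : ℝ → ℝ := fun t => 3 / (4 * ε) * t - 1 / (8 * ε ^ 3) * t ^ 2 with hP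
  set Q : ℝ → ℝ := fun t => Real.sqrt t - 3 * ε / 8 with hQ
  set P1 : ℝ → ℝ := fun t => 3 / (4 * ε) - 1 / (8 * ε ^ 3) * (2 * t) with hP1
  set Q1 : ℝ → ℝ := fun t => 1 / (2 * Real.sqrt t) with hQ1
  set P2 : ℝ → ℝ := fun _ => -(1 / (4 * ε ^ 3)) with hP2
  set Q2 : ℝ → ℝ := fun t => -(1 / (4 * t * Real.sqrt t)) with hQ2
  set g : ℝ → ℝ := fun t => if t < b then P t else Q t with hg
  set g1 : ℝ → ℝ := fun t => if t < b then P1 t else Q1 t with hg1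
  set g2 : ℝ → ℝ := fun t => if t < b then P2 t else Q2 t with hg2
  -- derivatives of pieces
  have hPd : ∀ t : ℝ, HasDerivAt P (P1 t) t := by
    intro t
    have h1 : HasDerivAt (fun t : ℝ => 3 / (4 * ε) * t) (3 / (4 * ε)) t := by
      simpa using (hasDerivAt_id t).const_mul (3 / (4 * ε))
    have h2 := (hasDerivAt_pow 2 t).const_mul (1 / (8 * ε ^ 3))
    convert h1.sub h2 using 1
    iterate 3 rfl
    push_cast
    ring
  have hQd : ∀ t : ℝ, t ≠ 0 → HasDerivAt Q (Q1 t) t := by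
    intro t ht
    simpa [hQ, hQ1] using (Real.hasDerivAt_sqrt ht).sub_const (3 * ε / 8)
  have hP1d : ∀ t : ℝ, HasDerivAt P1 (P2 t) t := by
    intro t
    have h2 := ((hasDerivAt_id t).const_mul 2).const_mul (1 / (8 * ε ^ 3))
    have h3 := (hasDerivAt_const t (3 / (4 * ε))).sub h2
    convert h3 using 1
    iterate 3 rfl
    rw [hP2]
    ring
  have hQ1d : ∀ t : ℝ, 0 < t → HasDerivAt Q1 (Q2 t) t := by
    intro t ht
    have hst : Real.sqrt t ≠ 0 := by positivity
    have h1 : HasDerivAt (fun t : ℝ => 2 * Real.sqrt t) (2 * (1 / (2 * Real.sqrt t))) t :=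
      (Real.hasDerivAt_sqrt ht.ne').const_mul 2
    have h2 : (2 : ℝ) * Real.sqrt t ≠ 0 := by positivity
    have := h1.inv h2
    have heq : (fun t : ℝ => 2 * Real.sqrt t)⁻¹ = Q1 := by
      funext s; simp [hQ1, one_div]
    rw [heq] at this
    convert this using 1
    iterate 2 rfl
    rw [hQ2]
    have hsq : Real.sqrt t ^ 2 = t := Real.sq_sqrt ht.le
    field_simp
    linear_combination (-4) * hsq
  -- matching values at b
  have hPQb : P b = Q b := by
    simp only [hP, hQ]
    rw [hsb, hbdef]
    field_simp
    ring
  have hP1Qb : P1 b = Q1 b := by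
    simp only [hP1, hQ1]
    rw [hsb, hbdef]
    field_simp
    ring
  have hP2Qb : P2 b = Q2 b := by
    simp only [hP2, hQ2]
    rw [hsb, hbdef]
    field_simp
  -- g has derivative g1 everywhere
  have hgd : ∀ t : ℝ, HasDerivAt g (g1 t) t := by
    intro t
    rcases lt_trichotomy t b with h | h | h
    · have : g1 t = P1 t := if_pos h
      rw [this]
      refine (hPd t).congr_of_eventuallyEq ?_
      filter_upwards [Iio_mem_nhds h] with s hs
      exact if_pos hs
    · subst h
      have hgb : g b = Q b := if_neg (lt_irrefl b)
      have hg1b : g1 b = Q1 b := if_neg (lt_irrefl b)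
      rw [hg1b, ← hP1Qb]
      refine choice_hasDerivAt (hPd b) (by rw [hP1Qb]; exact hQd b hb.ne') ?_ ?_ ?_
      · rw [hgb, hPQb]
      · rw [hgb]
      · intro s
        by_cases hs : s < b
        · left; exact if_pos hs
        · right; exact if_neg hs
    · have : g1 t = Q1 t := if_neg (not_lt.2 h.le)
      rw [this]
      refine (hQd t (hb.trans h).ne').congr_of_eventuallyEq ?_
      filter_upwards [Ioi_mem_nhds h] with s hs
      exact if_neg (not_lt.2 (le_of_lt hs))
  -- g1 has derivative g2 everywhere
  have hg1d : ∀ t : ℝ, HasDerivAt g1 (g2 t) t := by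
    intro t
    rcases lt_trichotomy t b with h | h | h
    · have : g2 t = P2 t := if_pos h
      rw [this]
      refine (hP1d t).congr_of_eventuallyEq ?_
      filter_upwards [Iio_mem_nhds h] with s hs
      exact if_pos hs
    · subst h
      have hg1b : g1 b = Q1 b := if_neg (lt_irrefl b)
      have hg2b : g2 b = Q2 b := if_neg (lt_irrefl b)
      rw [hg2b, ← hP2Qb]
      refine choice_hasDerivAt (hP1d b) (by rw [hP2Qb]; exact hQ1d b hb) ?_ ?_ ?_
      · rw [hg1b, hP1Qb]
      · rw [hg1b]
      · intro s
        by_cases hs : s < b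
        · left; exact if_pos hs
        · right; exact if_neg hs
    · have : g2 t = Q2 t := if_neg (not_lt.2 h.le)
      rw [this]
      refine (hQ1d t (hb.trans h)).congr_of_eventuallyEq ?_
      filter_upwards [Ioi_mem_nhds h] with s hs
      exact if_neg (not_lt.2 (le_of_lt hs))
  -- g2 is continuous
  have hg2c : Continuous g2 := by
    rw [continuous_iff_continuousAt]
    intro t
    rcases lt_trichotomy t b with h | h | h
    · refine (continuousAt_const : ContinuousAt P2 t).congr ?_
      filter_upwards [Iio_mem_nhds h] with s hs
      exact (if_pos hs).symm
    · subst h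
      have hQ2c : ContinuousAt Q2 b := by
        have h4 : (4 : ℝ) * b * Real.sqrt b ≠ 0 := by
          rw [hsb]; positivity
        exact (((continuousAt_const.mul continuousAt_id).mul
          (Real.continuous_sqrt.continuousAt)).inv₀ h4).neg.congr (by
            filter_upwards with s; simp [hQ2, one_div])
      have hg2b : g2 b = Q2 b := if_neg (lt_irrefl b)
      refine choice_continuousAt (continuousAt_const : ContinuousAt P2 b) hQ2c ?_ ?_ ?_
      · rw [hg2b, ← hP2Qb]
      · rw [hg2b]
      · intro s
        by_cases hs : s < b
        · left; exact if_pos hs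
        · right; exact if_neg hs
    · have hQ2c : ContinuousAt Q2 t := by
        have h4 : (4 : ℝ) * t * Real.sqrt t ≠ 0 := by
          have ht : 0 < t := hb.trans h
          have : 0 < Real.sqrt t := Real.sqrt_pos.2 ht
          positivity
        exact (((continuousAt_const.mul continuousAt_id).mul
          (Real.continuous_sqrt.continuousAt)).inv₀ h4).neg.congr (by
            filter_upwards with s; simp [hQ2, one_div])
      refine hQ2c.congr ?_
      filter_upwards [Ioi_mem_nhds h] with s hs
      exact (if_neg (not_lt.2 (le_of_lt hs))).symm
  -- g is C²
  have hgC2 : ContDiff ℝ 2 g := by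
    have hd1 : deriv g = g1 := funext fun t => (hgd t).deriv
    have hd2 : deriv g1 = g2 := funext fun t => (hg1d t).deriv
    rw [show (2 : WithTop ℕ∞) = 1 + 1 by norm_num, contDiff_succ_iff_deriv]
    refine ⟨fun t => (hgd t).differentiableAt, by simp, ?_⟩
    rw [hd1, contDiff_one_iff_deriv, hd2]
    exact ⟨fun t => (hg1d t).differentiableAt, hg2c⟩
  -- huber = g ∘ ‖·‖²
  have hcomp : huber ε = fun v => g (‖v‖ ^ 2) := by
    funext v
    have hiff : ‖v‖ < ε ↔ ‖v‖ ^ 2 < b := by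
      rw [hbdef]
      constructor
      · intro h; exact pow_lt_pow_left₀ h (norm_nonneg v) two_ne_zero
      · intro h; exact lt_of_pow_lt_pow_left₀ 2 hε.le h
    simp only [huber, hg, hP, hQ]
    by_cases h : ‖v‖ < ε
    · rw [if_pos h, if_pos (hiff.1 h)]
      ring
    · rw [if_neg h, if_neg (fun hc => h (hiff.2 hc))]
      rw [Real.sqrt_sq (norm_nonneg v)]
  rw [hcomp]
  exact hgC2.comp (contDiff_norm_sq ℝ)
end

section
/- For every ε > 0, the function h_ε : ℝ² → ℝ is convex on ℝ². -/
/-- For every `ε > 0`, the Huber-type function `h_ε` is convex on `ℝ²`. -/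
theorem stmt_1 (ε : ℝ) (hε : 0 < ε) :
    ConvexOn ℝ Set.univ (huber ε) := by
  have hεne : ε ≠ 0 := hε.ne'
  set φ : ℝ → ℝ := fun t =>
    if t < ε then 3 / (4 * ε) * t ^ 2 - 1 / (8 * ε ^ 3) * t ^ 4 else t - 3 * ε / 8 with hφdef
  set ψ : ℝ → ℝ := fun t =>
    if t < ε then 3 / (2 * ε) * t - 1 / (2 * ε ^ 3) * t ^ 3 else 1 with hψdef
  -- continuity of φ
  have hφeq : φ = fun t =>
      if ε ≤ t then t - 3 * ε / 8 else 3 / (4 * ε) * t ^ 2 - 1 / (8 * ε ^ 3) * t ^ 4 := by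
    funext t
    by_cases h : t < ε
    · simp [φ, h, not_le.2 h]
    · simp [φ, h, not_lt.1 h]
  have hφcont : Continuous φ := by
    rw [hφeq]
    apply Continuous.if_le (by fun_prop) (by fun_prop) continuous_const continuous_id
    intro x hx
    subst hx
    field_simp
    ring
  have hψcont : Continuous ψ := by
    have : ψ = fun t => if ε ≤ t then (1 : ℝ) else 3 / (2 * ε) * t - 1 / (2 * ε ^ 3) * t ^ 3 := by
      funext t
      by_cases h : t < ε
      · simp [ψ, h, not_le.2 h]
      · simp [ψ, h, not_lt.1 h]
    rw [this]
    apply Continuous.if_le continuous_const (by fun_prop) continuous_const continuous_id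
    intro x hx
    subst hx
    field_simp
    ring
  -- derivative of φ
  have hderiv : ∀ y : ℝ, HasDerivAt φ (ψ y) y := by
    apply hasDerivAt_of_hasDerivAt_of_ne' (x := ε) _ hφcont.continuousAt hψcont.continuousAt
    intro y hy
    rcases hy.lt_or_gt with h | h
    · have hpoly : HasDerivAt (fun t : ℝ => 3 / (4 * ε) * t ^ 2 - 1 / (8 * ε ^ 3) * t ^ 4)
          (3 / (2 * ε) * y - 1 / (2 * ε ^ 3) * y ^ 3) y := by
        have h1 := (hasDerivAt_pow 2 y).const_mul (3 / (4 * ε))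
        have h2 := (hasDerivAt_pow 4 y).const_mul (1 / (8 * ε ^ 3))
        refine (h1.sub h2).congr_deriv ?_
        push_cast
        ring
      have hev : φ =ᶠ[nhds y] fun t : ℝ => 3 / (4 * ε) * t ^ 2 - 1 / (8 * ε ^ 3) * t ^ 4 :=
        Filter.eventually_of_mem (isOpen_Iio.mem_nhds h) fun t ht => if_pos ht
      have : ψ y = 3 / (2 * ε) * y - 1 / (2 * ε ^ 3) * y ^ 3 := if_pos h
      rw [this]
      exact hpoly.congr_of_eventuallyEq hev
    · have hlin : HasDerivAt (fun t : ℝ => t - 3 * ε / 8) 1 y := by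
        simpa using (hasDerivAt_id y).sub_const (3 * ε / 8)
      have hev : φ =ᶠ[nhds y] fun t : ℝ => t - 3 * ε / 8 :=
        Filter.eventually_of_mem (isOpen_Ioi.mem_nhds h) fun t ht =>
          if_neg (not_lt.2 (le_of_lt ht))
      have : ψ y = 1 := if_neg (not_lt.2 h.le)
      rw [this]
      exact hlin.congr_of_eventuallyEq hev
  have hderivφ : deriv φ = ψ := funext fun y => (hderiv y).deriv
  -- ψ is monotone on (0, ∞)
  have hψmono : MonotoneOn ψ (Set.Ioi (0 : ℝ)) := by
    have key : ∀ a : ℝ, 0 ≤ a → a < ε → ψ a = (3 * ε ^ 2 * a - a ^ 3) / (2 * ε ^ 3) := by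
      intro a _ ha
      simp only [ψ, if_pos ha]
      field_simp
    intro a ha b hb hab
    simp only [Set.mem_Ioi] at ha hb
    by_cases ha' : a < ε
    · by_cases hb' : b < ε
      · rw [key a ha.le ha', key b hb.le hb']
        apply div_le_div_of_nonneg_right ?_ (by positivity) |>.trans_eq rfl
        · have hin : (0:ℝ) ≤ 3 * ε ^ 2 - a ^ 2 - a * b - b ^ 2 := by
            nlinarith [mul_pos ha hb, mul_lt_mul_of_pos_left hb' ha,
              mul_lt_mul_of_pos_left ha' ha, mul_lt_mul_of_pos_left hb' hb]
          nlinarith [mul_nonneg (sub_nonneg.2 hab) hin]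
      · rw [key a ha.le ha', show ψ b = 1 from if_neg hb']
        rw [div_le_one (by positivity)]
        nlinarith [sq_nonneg (ε - a), mul_nonneg (sq_nonneg (ε - a)) (by linarith : (0:ℝ) ≤ a + 2 * ε)]
    · have hb' : ¬ b < ε := fun hc => ha' (lt_of_le_of_lt hab hc)
      rw [show ψ a = 1 from if_neg ha', show ψ b = 1 from if_neg hb']
  -- ψ is nonneg on (0, ∞)
  have hψnonneg : ∀ t ∈ Set.Ioi (0 : ℝ), 0 ≤ ψ t := by
    intro t ht
    simp only [Set.mem_Ioi] at ht
    by_cases h : t < ε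
    · simp only [ψ, if_pos h]
      rw [show 3 / (2 * ε) * t - 1 / (2 * ε ^ 3) * t ^ 3 = t * (3 * ε ^ 2 - t ^ 2) / (2 * ε ^ 3) by
        field_simp]
      apply div_nonneg _ (by positivity)
      apply mul_nonneg ht.le
      nlinarith
    · simp [ψ, if_neg h]
  have hintD : interior (Set.Ici (0 : ℝ)) = Set.Ioi 0 := interior_Ici
  have hdiff : DifferentiableOn ℝ φ (interior (Set.Ici (0 : ℝ))) :=
    fun y _ => (hderiv y).differentiableAt.differentiableWithinAt
  -- φ is convex and monotone on [0, ∞)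
  have hφconv : ConvexOn ℝ (Set.Ici (0 : ℝ)) φ := by
    apply MonotoneOn.convexOn_of_deriv (convex_Ici 0) hφcont.continuousOn hdiff
    rw [hderivφ, hintD]
    exact hψmono
  have hφmono : MonotoneOn φ (Set.Ici (0 : ℝ)) := by
    apply monotoneOn_of_deriv_nonneg (convex_Ici 0) hφcont.continuousOn hdiff
    rw [hderivφ, hintD]
    exact hψnonneg
  -- the image of the norm is [0, ∞)
  have himg : (fun v : EuclideanSpace ℝ (Fin 2) => ‖v‖) '' Set.univ = Set.Ici 0 := by
    apply Set.eq_of_subset_of_subset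
    · rintro r ⟨v, -, rfl⟩
      exact norm_nonneg v
    · intro r hr
      refine ⟨EuclideanSpace.single 0 r, Set.mem_univ _, ?_⟩
      simp [EuclideanSpace.norm_single, abs_of_nonneg (Set.mem_Ici.1 hr)]
  have hcomp : ConvexOn ℝ Set.univ (φ ∘ fun v : EuclideanSpace ℝ (Fin 2) => ‖v‖) :=
    ConvexOn.comp (himg ▸ hφconv) convexOn_univ_norm (himg ▸ hφmono)
  exact hcomp
end

section
/- For every ε > 0 and every v ∈ ℝ², one has 0 ≤ ‖v‖₂ − h_ε(v) ≤ 3ε/8; in particular h_ε is nonnegative and converges uniformly on ℝ² to the Euclidean norm as ε → 0⁺. -/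
open Filter

lemma huber_key (ε : ℝ) (hε : 0 < ε) (v : EuclideanSpace ℝ (Fin 2)) :
    0 ≤ ‖v‖ - huber ε v ∧ ‖v‖ - huber ε v ≤ 3 * ε / 8 ∧ 0 ≤ huber ε v := by
  set r := ‖v‖ with hr
  have hr0 : 0 ≤ r := norm_nonneg v
  unfold huber
  rw [← hr]
  by_cases h : r < ε
  · rw [if_pos h]
    have hεne : ε ≠ 0 := ne_of_gt hε
    have expand : 3 / (4 * ε) * r ^ 2 - 1 / (8 * ε ^ 3) * r ^ 4
        = (6 * ε ^ 2 * r ^ 2 - r ^ 4) / (8 * ε ^ 3) := by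
      field_simp
      ring
    rw [expand]
    have hd : (0:ℝ) < 8 * ε ^ 3 := by positivity
    refine ⟨?_, ?_, ?_⟩
    · rw [sub_nonneg, div_le_iff₀ hd]
      nlinarith [mul_nonneg (mul_nonneg hr0 (sub_nonneg.2 h.le)) (sq_nonneg ε),
        mul_nonneg (pow_nonneg hε.le 3) hr0, pow_nonneg hr0 4]
    · have key : 0 ≤ (ε - r) ^ 3 * (3 * ε + r) := by
        have h1 : 0 ≤ (ε - r) ^ 3 := pow_nonneg (by linarith) 3
        have h2 : 0 ≤ 3 * ε + r := by linarith
        exact mul_nonneg h1 h2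
      rw [sub_le_iff_le_add, ← sub_le_iff_le_add', le_div_iff₀ hd]
      nlinarith [key]
    · apply div_nonneg _ hd.le
      nlinarith [mul_nonneg (mul_nonneg (sub_nonneg.2 h.le) (by linarith : (0:ℝ) ≤ ε + r)) (sq_nonneg r),
        mul_nonneg (sq_nonneg ε) (sq_nonneg r)]
  · rw [if_neg h]
    push_neg at h
    exact ⟨by nlinarith, by nlinarith, by nlinarith⟩

/-- For every `ε > 0` and every `v ∈ ℝ²`, `0 ≤ ‖v‖ − h_ε(v) ≤ 3ε/8`; in particular
`h_ε` is nonnegative and converges uniformly on `ℝ²` to the Euclidean norm as `ε → 0⁺`. -/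
theorem stmt_2 :
    (∀ ε : ℝ, 0 < ε → ∀ v : EuclideanSpace ℝ (Fin 2),
      0 ≤ ‖v‖ - huber ε v ∧ ‖v‖ - huber ε v ≤ 3 * ε / 8 ∧ 0 ≤ huber ε v) ∧
    TendstoUniformly (fun (ε : ℝ) (v : EuclideanSpace ℝ (Fin 2)) => huber ε v)
      (fun v => ‖v‖) (nhdsWithin (0 : ℝ) (Set.Ioi 0)) := by
  refine ⟨fun ε hε v => huber_key ε hε v, ?_⟩
  rw [Metric.tendstoUniformly_iff]
  intro δ hδ
  have hmem : Set.Ioo (0:ℝ) δ ∈ nhdsWithin (0 : ℝ) (Set.Ioi 0) :=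
    Ioo_mem_nhdsGT_of_mem ⟨le_refl 0, hδ⟩
  filter_upwards [hmem] with ε hε v
  obtain ⟨h1, h2, _⟩ := huber_key ε hε.1 v
  rw [Real.dist_eq, abs_sub_lt_iff]
  constructor
  · nlinarith [hε.2]
  · nlinarith [hε.2]
end

section
/- For every ε > 0, the gradient ∇h_ε : ℝ² → ℝ² is Lipschitz continuous with constant 3/(2ε); equivalently, the operator norm of the Hessian satisfies ‖∇²h_ε(v)‖₂ ≤ 3/(2ε) for every v ∈ ℝ². -/
namespace HuberProof

open RealInnerProductSpace

local notation "E" => EuclideanSpace ℝ (Fin 2)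

/-- The normalized (ε = 1) gradient map. -/
noncomputable def G (u : E) : E := if ‖u‖ < 1 then (3/2 - ‖u‖^2/2) • u else ‖u‖⁻¹ • u

lemma G_le {u : E} (h : ‖u‖ ≤ 1) : G u = (3/2 - ‖u‖^2/2) • u := by
  rcases lt_or_eq_of_le h with h' | h'
  · simp [G, h']
  · rw [G, if_neg (by rw [h']; exact lt_irrefl 1), h']
    norm_num

lemma G_ge {u : E} (h : 1 ≤ ‖u‖) : G u = ‖u‖⁻¹ • u := by
  rw [G, if_neg (not_lt.2 h)]

lemma norm_expand (a b : ℝ) (v w : E) :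
    ‖a • v - b • w‖^2 = a^2*‖v‖^2 - 2*(a*b)*⟪v,w⟫ + b^2*‖w‖^2 := by
  rw [norm_sub_sq_real, norm_smul, norm_smul, real_inner_smul_left, real_inner_smul_right,
    Real.norm_eq_abs, Real.norm_eq_abs, mul_pow, mul_pow, sq_abs, sq_abs]
  ring

lemma le_of_sq_le_sq'' {a b : ℝ} (h : a^2 ≤ b^2) (ha : 0 ≤ a) (hb : 0 ≤ b) : a ≤ b := by
  nlinarith

lemma G_lip_le {v w : E} (hv : ‖v‖ ≤ 1) (hw : ‖w‖ ≤ 1) : ‖G v - G w‖ ≤ 3/2 * ‖v - w‖ := by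
  rw [G_le hv, G_le hw]
  apply le_of_sq_le_sq'' _ (norm_nonneg _) (by positivity)
  rw [norm_expand, mul_pow, norm_sub_sq_real]
  set a := ‖v‖ with ha_def
  set b := ‖w‖ with hb_def
  set t := ⟪v,w⟫ with ht_def
  have ha0 : 0 ≤ a := norm_nonneg v
  have hb0 : 0 ≤ b := norm_nonneg w
  have ht : t ≤ a*b := real_inner_le_norm v w
  nlinarith [mul_nonneg (mul_nonneg (sq_nonneg (a-b)) (by nlinarith : (0:ℝ) ≤ a^2+a*b+b^2))
      (by nlinarith : (0:ℝ) ≤ 6 - (a^2+a*b+b^2)),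
    mul_nonneg (by nlinarith : (0:ℝ) ≤ a*b - t)
      (by nlinarith [mul_nonneg (by nlinarith : (0:ℝ) ≤ 1 - a^2) (sq_nonneg b)] :
        (0:ℝ) ≤ 9 - (3-a^2)*(3-b^2)),
    sq_nonneg (a-b), sq_nonneg (a+b)]

lemma G_lip_ge {v w : E} (hv : 1 ≤ ‖v‖) (hw : 1 ≤ ‖w‖) : ‖G v - G w‖ ≤ 3/2 * ‖v - w‖ := by
  rw [G_ge hv, G_ge hw]
  apply le_of_sq_le_sq'' _ (norm_nonneg _) (by positivity)
  rw [norm_expand, mul_pow, norm_sub_sq_real]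
  set a := ‖v‖ with ha_def
  set b := ‖w‖ with hb_def
  set t := ⟪v,w⟫ with ht_def
  have ha0 : (0:ℝ) < a := lt_of_lt_of_le one_pos hv
  have hb0 : (0:ℝ) < b := lt_of_lt_of_le one_pos hw
  have ht : t ≤ a*b := real_inner_le_norm v w
  have hab : (0:ℝ) < a*b := mul_pos ha0 hb0
  have key : 2*(a*b) - 2*t ≤ (a^2 - 2*t + b^2) * (a*b) := by
    nlinarith [mul_nonneg (le_of_lt hab) (sq_nonneg (a-b)),
      mul_nonneg (by nlinarith : (0:ℝ) ≤ a*b - 1) (by linarith : (0:ℝ) ≤ a*b - t)]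
  have e1 : a⁻¹^2*a^2 - 2*(a⁻¹*b⁻¹)*t + b⁻¹^2*b^2 = 2 - 2*t/(a*b) := by
    field_simp
    ring
  rw [e1]
  have h2 : 2 - 2*t/(a*b) ≤ a^2 - 2*t + b^2 := by
    rw [show 2 - 2*t/(a*b) = (2*(a*b) - 2*t)/(a*b) by field_simp, div_le_iff₀ hab]
    exact key
  have h3 : 0 ≤ a^2 - 2*t + b^2 := by
    rw [ha_def, hb_def, ht_def, ← norm_sub_sq_real]
    positivity
  nlinarith

lemma G_lip_mixed {v w : E} (hv : ‖v‖ ≤ 1) (hw : 1 ≤ ‖w‖) :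
    ‖G v - G w‖ ≤ 3/2 * ‖v - w‖ := by
  have hcont : ContinuousOn (fun s : ℝ => ‖v + s • (w - v)‖) (Set.Icc 0 1) := by fun_prop
  have hmem : (1:ℝ) ∈ Set.Icc ‖v + (0:ℝ) • (w - v)‖ ‖v + (1:ℝ) • (w - v)‖ := by
    simp only [zero_smul, add_zero, one_smul]
    constructor
    · exact hv
    · simpa using hw
  obtain ⟨s, hs01, hu⟩ := intermediate_value_Icc zero_le_one hcont hmem
  set u := v + s • (w - v) with hu_def
  have huv : v - u = (-s) • (w - v) := by rw [hu_def]; module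
  have huw : u - w = (s - 1) • (w - v) := by rw [hu_def]; module
  have hnvu : ‖v - u‖ = s * ‖w - v‖ := by
    rw [huv, norm_smul, Real.norm_eq_abs, abs_neg, abs_of_nonneg hs01.1]
  have hnuw : ‖u - w‖ = (1 - s) * ‖w - v‖ := by
    rw [huw, norm_smul, Real.norm_eq_abs, abs_of_nonpos (by linarith [hs01.2]), neg_sub]
  have h1 : ‖G v - G u‖ ≤ 3/2 * ‖v - u‖ := G_lip_le hv (le_of_eq hu)
  have h2 : ‖G u - G w‖ ≤ 3/2 * ‖u - w‖ := G_lip_ge (ge_of_eq hu) hw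
  calc ‖G v - G w‖ ≤ ‖G v - G u‖ + ‖G u - G w‖ := norm_sub_le_norm_sub_add_norm_sub _ _ _
    _ ≤ 3/2 * ‖v - u‖ + 3/2 * ‖u - w‖ := add_le_add h1 h2
    _ = 3/2 * ‖w - v‖ := by rw [hnvu, hnuw]; ring
    _ = 3/2 * ‖v - w‖ := by rw [norm_sub_rev]

lemma G_lip (v w : E) : ‖G v - G w‖ ≤ 3/2 * ‖v - w‖ := by
  rcases le_total ‖v‖ 1 with hv | hv
  · rcases le_total ‖w‖ 1 with hw | hw
    · exact G_lip_le hv hw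
    · exact G_lip_mixed hv hw
  · rcases le_total ‖w‖ 1 with hw | hw
    · rw [norm_sub_rev, norm_sub_rev v w]
      exact G_lip_mixed hw hv
    · exact G_lip_ge hv hw

lemma hasGradientAt_of {f : E → ℝ} {a x : E} {L : E →L[ℝ] ℝ}
    (hL : HasFDerivAt f L x) (h : ∀ y, L y = ⟪a, y⟫) : HasGradientAt f a x := by
  rw [hasGradientAt_iff_hasFDerivAt]
  have : InnerProductSpace.toDual ℝ E a = L :=
    ContinuousLinearMap.ext fun y => by rw [InnerProductSpace.toDual_apply_apply, h y]
  rw [this]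
  exact hL

lemma hasFDerivAt_inner_self (v : E) :
    HasFDerivAt (fun x : E => ⟪x,x⟫)
      ((fderivInnerCLM ℝ (v, v)).comp ((ContinuousLinearMap.id ℝ E).prod
        (ContinuousLinearMap.id ℝ E))) v :=
  (hasFDerivAt_id v).inner ℝ (hasFDerivAt_id v)

lemma hasGradientAt_norm {v : E} (hv : v ≠ 0) :
    HasGradientAt (fun x : E => ‖x‖) (‖v‖⁻¹ • v) v := by
  have h0 : (0:ℝ) < ⟪v,v⟫ := by
    rw [real_inner_self_eq_norm_sq]
    exact pow_pos (norm_pos_iff.mpr hv) 2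
  have hs : HasDerivAt Real.sqrt (1/(2*Real.sqrt ⟪v,v⟫)) ⟪v,v⟫ :=
    Real.hasDerivAt_sqrt (ne_of_gt h0)
  have hc := hs.comp_hasFDerivAt (f := fun x : E => ⟪x,x⟫) v (hasFDerivAt_inner_self v)
  have hfun : (Real.sqrt ∘ fun x : E => ⟪x,x⟫) = fun x : E => ‖x‖ := by
    funext x
    simp only [Function.comp_apply]
    rw [real_inner_self_eq_norm_sq, Real.sqrt_sq (norm_nonneg x)]
  rw [hfun] at hc
  have hnv : ‖v‖ ≠ 0 := norm_ne_zero_iff.2 hv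
  refine hasGradientAt_of hc fun y => ?_
  simp only [ContinuousLinearMap.coe_smul', Pi.smul_apply, ContinuousLinearMap.coe_comp',
    Function.comp_apply, ContinuousLinearMap.prod_apply, ContinuousLinearMap.coe_id', id_eq,
    fderivInnerCLM_apply, smul_eq_mul, real_inner_smul_left]
  rw [real_inner_comm y v, real_inner_self_eq_norm_sq]
  rw [Real.sqrt_sq (norm_nonneg v)]
  field_simp
  ring

variable {ε : ℝ}

lemma norm_inv_smul (hε : 0 < ε) (v : E) : ‖ε⁻¹ • v‖ = ‖v‖ / ε := by
  rw [norm_smul, Real.norm_eq_abs, abs_of_pos (inv_pos.2 hε), div_eq_inv_mul]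

/-- Gradient in the interior of the ball. -/
lemma grad_lt (hε : 0 < ε) {v : E} (h : ‖v‖ < ε) :
    HasGradientAt (huber ε) (G (ε⁻¹ • v)) v := by
  have hGv : G (ε⁻¹ • v) = (3/(2*ε) - ‖v‖^2/(2*ε^3)) • v := by
    rw [G_le (by rw [norm_inv_smul hε]; exact le_of_lt ((div_lt_one hε).2 h)),
      norm_inv_smul hε, smul_smul]
    congr 1
    field_simp
  -- the polynomial function
  have h1 : HasDerivAt (fun s : ℝ => 3/(4*ε)*s - 1/(8*ε^3)*s^2)
      (3/(4*ε) - 1/(8*ε^3)*(2*⟪v,v⟫)) ⟪v,v⟫ := by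
    have hab := ((hasDerivAt_id (⟪v,v⟫ : ℝ)).const_mul (3/(4*ε))).sub
      ((hasDerivAt_pow 2 (⟪v,v⟫ : ℝ)).const_mul (1/(8*ε^3)))
    convert hab using 2
    · rfl
    · rfl
    all_goals simp <;> ring
  have hc := h1.comp_hasFDerivAt (f := fun x : E => ⟪x,x⟫) v (hasFDerivAt_inner_self v)
  have hp : HasGradientAt (fun x : E => 3/(4*ε)*‖x‖^2 - 1/(8*ε^3)*‖x‖^4)
      (G (ε⁻¹ • v)) v := by
    have hfun : ((fun s : ℝ => 3/(4*ε)*s - 1/(8*ε^3)*s^2) ∘ fun x : E => ⟪x,x⟫)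
        = fun x : E => 3/(4*ε)*‖x‖^2 - 1/(8*ε^3)*‖x‖^4 := by
      funext x
      simp only [Function.comp_apply, real_inner_self_eq_norm_sq]
      ring
    rw [hfun] at hc
    refine hasGradientAt_of hc fun y => ?_
    rw [hGv]
    simp only [ContinuousLinearMap.coe_smul', Pi.smul_apply, ContinuousLinearMap.coe_comp',
      Function.comp_apply, ContinuousLinearMap.prod_apply, ContinuousLinearMap.coe_id', id_eq,
      fderivInnerCLM_apply, smul_eq_mul, real_inner_smul_left]
    rw [real_inner_comm y v, real_inner_self_eq_norm_sq]
    field_simp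
    ring
  apply hp.congr_of_eventuallyEq
  have hmem : {x : E | ‖x‖ < ε} ∈ nhds v := by
    have : IsOpen {x : E | ‖x‖ < ε} := isOpen_lt continuous_norm continuous_const
    exact this.mem_nhds h
  filter_upwards [hmem] with x hx
  rw [huber, if_pos hx]

/-- Gradient of the linear-plus-constant part; valid at every nonzero point. -/
lemma grad_outer (hε : 0 < ε) {v : E} (hv : v ≠ 0) :
    HasGradientAt (fun x : E => ‖x‖ - 3*ε/8) (‖v‖⁻¹ • v) v := by
  have h := hasGradientAt_norm hv
  rw [hasGradientAt_iff_hasFDerivAt] at h ⊢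
  exact h.sub_const _

lemma G_eq_outer (hε : 0 < ε) {v : E} (h : ε ≤ ‖v‖) : G (ε⁻¹ • v) = ‖v‖⁻¹ • v := by
  have hv0 : (0:ℝ) < ‖v‖ := lt_of_lt_of_le hε h
  rw [G_ge (by rw [norm_inv_smul hε]; exact (one_le_div hε).2 h), norm_inv_smul hε, smul_smul]
  congr 1
  field_simp

lemma grad_gt (hε : 0 < ε) {v : E} (h : ε < ‖v‖) :
    HasGradientAt (huber ε) (G (ε⁻¹ • v)) v := by
  have hv : v ≠ 0 := by
    intro h0
    rw [h0, norm_zero] at h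
    exact absurd h (not_lt.2 (le_of_lt hε))
  rw [G_eq_outer hε (le_of_lt h)]
  apply (grad_outer hε hv).congr_of_eventuallyEq
  have hmem : {x : E | ε < ‖x‖} ∈ nhds v := by
    have : IsOpen {x : E | ε < ‖x‖} := isOpen_lt continuous_const continuous_norm
    exact this.mem_nhds h
  filter_upwards [hmem] with x hx
  rw [huber, if_neg (not_lt.2 (le_of_lt hx))]

lemma grad_eq (hε : 0 < ε) {v : E} (h : ‖v‖ = ε) :
    HasGradientAt (huber ε) (G (ε⁻¹ • v)) v := by
  have hv : v ≠ 0 := by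
    intro h0
    rw [h0, norm_zero] at h
    exact absurd h.symm (ne_of_gt hε)
  rw [G_eq_outer hε (le_of_eq h.symm)]
  -- huber = outer + D  with D having derivative 0
  have hq := grad_outer hε hv
  rw [hasGradientAt_iff_hasFDerivAt] at hq ⊢
  have hD : HasFDerivAt (fun x : E => huber ε x - (‖x‖ - 3*ε/8)) (0 : E →L[ℝ] ℝ) v := by
    have hgoal : HasGradientAt (fun x : E => huber ε x - (‖x‖ - 3*ε/8)) (0 : E) v := by
      rw [hasGradientAt_iff_isLittleO, Asymptotics.isLittleO_iff]
      intro c hc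
      have hδ : (0:ℝ) < min ε (Real.sqrt (2*ε^2*c)) := lt_min hε (Real.sqrt_pos.2 (by positivity))
      have hev : ∀ᶠ x' in nhds v, ‖x' - v‖ < min ε (Real.sqrt (2*ε^2*c)) := by
        have := Metric.ball_mem_nhds v hδ
        filter_upwards [this] with x' hx'
        rwa [Metric.mem_ball, dist_eq_norm] at hx'
      filter_upwards [hev] with x' hx'
      have hfv : huber ε v - (‖v‖ - 3*ε/8) = 0 := by
        rw [huber, if_neg (by rw [h]; exact lt_irrefl ε), sub_self]
      simp only [inner_zero_left, sub_zero, hfv]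
      set d := ‖x' - v‖ with hd_def
      have hd0 : 0 ≤ d := norm_nonneg _
      rcases lt_or_ge ‖x'‖ ε with hr | hr
      · rw [huber, if_pos hr]
        set r := ‖x'‖ with hr_def
        have hr0 : 0 ≤ r := norm_nonneg _
        have hre : ε - r ≤ d := by
          have := abs_norm_sub_norm_le x' v
          rw [← hr_def, h, ← hd_def] at this
          have := neg_le_of_abs_le this
          linarith
        have hre0 : 0 ≤ ε - r := by linarith
        have heq : 3/(4*ε)*r^2 - 1/(8*ε^3)*r^4 - (r - 3*ε/8)
            = (ε-r)^3*(r+3*ε)/(8*ε^3) := by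
          field_simp
          ring
        rw [Real.norm_eq_abs, heq, abs_of_nonneg (by positivity)]
        rw [div_le_iff₀ (by positivity)]
        have hd2 : d^2 < 2*ε^2*c := by
          have hds : d < Real.sqrt (2*ε^2*c) := lt_of_lt_of_le hx' (min_le_right _ _)
          nlinarith [Real.sq_sqrt (le_of_lt (show (0:ℝ) < 2*ε^2*c by positivity)),
            Real.sqrt_nonneg (2*ε^2*c)]
        calc (ε-r)^3*(r+3*ε) ≤ d^3*(4*ε) := by
              apply mul_le_mul (pow_le_pow_left₀ hre0 hre 3) (by linarith) (by linarith)
                (by positivity)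
          _ = 4*ε*(d*d^2) := by ring
          _ ≤ 4*ε*(d*(2*ε^2*c)) := by
              apply mul_le_mul_of_nonneg_left _ (by positivity)
              exact mul_le_mul_of_nonneg_left (le_of_lt hd2) hd0
          _ = c * d * (8*ε^3) := by ring
      · rw [huber, if_neg (not_lt.2 hr), sub_self, norm_zero]
        positivity
    have := hasGradientAt_iff_hasFDerivAt.1 hgoal
    rwa [map_zero] at this
  have hsum := hq.add hD
  have hfun : ((fun x : E => ‖x‖ - 3*ε/8) + fun x : E => huber ε x - (‖x‖ - 3*ε/8)) = huber ε := by
    funext x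
    simp only [Pi.add_apply]
    ring
  rw [hfun] at hsum
  simpa using hsum

lemma grad_all (hε : 0 < ε) (v : E) : HasGradientAt (huber ε) (G (ε⁻¹ • v)) v := by
  rcases lt_trichotomy ‖v‖ ε with h | h | h
  · exact grad_lt hε h
  · exact grad_eq hε h
  · exact grad_gt hε h

end HuberProof

/-- For every `ε > 0`, the gradient `∇h_ε : ℝ² → ℝ²` is Lipschitz continuous with
constant `3/(2ε)`; equivalently, the operator norm of the Hessian satisfies
`‖∇²h_ε(v)‖ ≤ 3/(2ε)` for every `v ∈ ℝ²`. -/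
theorem stmt_4 (ε : ℝ) (hε : 0 < ε) :
    (∀ v w : EuclideanSpace ℝ (Fin 2),
      ‖gradient (huber ε) v - gradient (huber ε) w‖ ≤ 3 / (2 * ε) * ‖v - w‖) ∧
    (∀ v : EuclideanSpace ℝ (Fin 2),
      ‖fderiv ℝ (gradient (huber ε)) v‖ ≤ 3 / (2 * ε)) := by
  have hgrad : ∀ v : EuclideanSpace ℝ (Fin 2),
      gradient (huber ε) v = HuberProof.G (ε⁻¹ • v) :=
    fun v => (HuberProof.grad_all hε v).gradient
  have hbound : ∀ v w : EuclideanSpace ℝ (Fin 2),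
      ‖gradient (huber ε) v - gradient (huber ε) w‖ ≤ 3 / (2 * ε) * ‖v - w‖ := by
    intro v w
    rw [hgrad v, hgrad w]
    calc ‖HuberProof.G (ε⁻¹ • v) - HuberProof.G (ε⁻¹ • w)‖
        ≤ 3/2 * ‖ε⁻¹ • v - ε⁻¹ • w‖ := HuberProof.G_lip _ _
      _ = 3 / (2 * ε) * ‖v - w‖ := by
          rw [← smul_sub, norm_smul, Real.norm_eq_abs, abs_of_pos (inv_pos.2 hε)]
          field_simp
  refine ⟨hbound, fun v => ?_⟩
  have hlip : LipschitzWith (Real.toNNReal (3 / (2 * ε))) (gradient (huber ε)) := by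
    apply LipschitzWith.of_dist_le_mul
    intro x y
    rw [dist_eq_norm, dist_eq_norm, Real.coe_toNNReal _ (by positivity)]
    exact hbound x y
  calc ‖fderiv ℝ (gradient (huber ε)) v‖ ≤ (Real.toNNReal (3 / (2 * ε)) : ℝ) :=
        norm_fderiv_le_of_lipschitz ℝ hlip
    _ = 3 / (2 * ε) := Real.coe_toNNReal _ (by positivity)
end

section
/- Let (X_i)_{i∈ℕ} be a sequence of independent, identically distributed real Gaussian random variables with mean 0 and variance σ² > 0, and fix a lag k ≥ 1. For each n > k, define the normalised circular autocorrelation at lag k by γ_n = (Σ_{i=0}^{n−1} X_i X_{(i+k) mod n}) / (Σ_{i=0}^{n−1} X_i²). Then γ_n converges to 0 in probability as n → ∞ (asymptotic whiteness of white Gaussian noise at every nonzero lag). -/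
/-!
Write `γₙ = (Nₙ / n) / (Dₙ / n)` with `Nₙ = ∑ Xᵢ X_{(i+k) mod n}` and `Dₙ = ∑ Xᵢ²`. By the strong
law of large numbers `Dₙ / n → σ²` almost surely. For `n > 2k` the lag products
`Xᵢ X_{(i+k) mod n}` are pairwise orthogonal in `L²`, since in the product of two of them some
centred factor occurs exactly once; hence `E[Nₙ²] = n σ⁴` and Chebyshev's inequality gives
`Nₙ / n → 0` in probability.
-/

open MeasureTheory ProbabilityTheory Filter Topology Finset
open scoped ENNReal NNReal

section ConvergenceInMeasure

variable {Ω ι : Type*} [MeasurableSpace Ω] {P : Measure Ω} {l : Filter ι}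

theorem MeasureTheory.TendstoInMeasure.div_of_tendsto_zero {f g : ι → Ω → ℝ} {c : ℝ}
    (hc : c ≠ 0) (hf : TendstoInMeasure P f l fun _ => 0)
    (hg : TendstoInMeasure P g l fun _ => c) :
    TendstoInMeasure P (fun i ω => f i ω / g i ω) l fun _ => 0 := by
  rw [tendstoInMeasure_iff_dist] at *
  intro ε hε
  have hc' : 0 < |c| / 2 := by positivity
  -- Off `{|g - c| ≥ |c|/2}` we have `|g| > |c|/2`, hence `|f / g| < 2|f|/|c|`.
  have hsub : ∀ i, {ω | ε ≤ dist (f i ω / g i ω) 0} ⊆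
      {ω | |c| / 2 ≤ dist (g i ω) c} ∪ {ω | ε * (|c| / 2) ≤ dist (f i ω) 0} := by
    intro i ω hω
    by_contra h
    simp only [Set.mem_union, Set.mem_ofPred_eq, not_or, not_le, Real.dist_eq, sub_zero] at h hω
    have hg : |c| / 2 < |g i ω| := by
      linarith [abs_sub_abs_le_abs_sub c (g i ω), abs_sub_comm c (g i ω)]
    rw [abs_div, le_div_iff₀ (by linarith)] at hω
    nlinarith
  refine tendsto_of_tendsto_of_tendsto_of_le_of_le tendsto_const_nhds
    (by simpa using (hg _ hc').add (hf _ (mul_pos hε hc'))) (fun _ => zero_le)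
    fun i => (measure_mono (hsub i)).trans (measure_union_le _ _)

theorem MeasureTheory.tendstoInMeasure_zero_of_integral_sq_tendsto_zero [IsFiniteMeasure P]
    {f : ι → Ω → ℝ} (hf : ∀ i, Integrable (fun ω => f i ω ^ 2) P)
    (h : Tendsto (fun i => ∫ ω, f i ω ^ 2 ∂P) l (𝓝 0)) :
    TendstoInMeasure P f l fun _ => 0 := by
  rw [tendstoInMeasure_iff_measureReal_dist]
  intro ε hε
  have hmarkov : ∀ i, P.real {ω | ε ≤ dist (f i ω) 0} ≤ (∫ ω, f i ω ^ 2 ∂P) / ε ^ 2 := by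
    intro i
    have hsub : {ω | ε ≤ dist (f i ω) 0} ⊆ {ω | ε ^ 2 ≤ f i ω ^ 2} := fun ω hω => by
      simpa [Real.dist_eq, sq_abs] using pow_le_pow_left₀ hε.le hω 2
    rw [le_div_iff₀ (by positivity), mul_comm]
    exact (mul_le_mul_of_nonneg_left (measureReal_mono hsub) (by positivity)).trans
      (mul_meas_ge_le_integral_of_nonneg (ae_of_all _ fun ω => sq_nonneg _) (hf i) _)
  refine tendsto_of_tendsto_of_tendsto_of_le_of_le tendsto_const_nhds
    (by simpa using h.div_const (ε ^ 2)) (fun _ => measureReal_nonneg) hmarkov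

end ConvergenceInMeasure

section Moments

variable {Ω ι : Type*} [MeasurableSpace Ω] {P : Measure Ω}

theorem MeasureTheory.MemLp.mul_of_four {f g : Ω → ℝ} (hf : MemLp f 4 P) (hg : MemLp g 4 P) :
    MemLp (fun ω => f ω * g ω) 2 P :=
  haveI : ENNReal.HolderTriple 4 4 2 := ⟨by
    rw [← two_mul, show (4 : ℝ≥0∞) = 2 * 2 by norm_num, ENNReal.mul_inv (by simp) (by simp),
      ← mul_assoc, ENNReal.mul_inv_cancel (by simp) (by simp), one_mul]⟩
  hg.mul' hf

theorem integral_sq_sum_of_orthogonal {T : ι → Ω → ℝ} (s : Finset ι)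
    (hT : ∀ i ∈ s, MemLp (T i) 2 P)
    (horth : ∀ i ∈ s, ∀ j ∈ s, i ≠ j → ∫ ω, T i ω * T j ω ∂P = 0) :
    ∫ ω, (∑ i ∈ s, T i ω) ^ 2 ∂P = ∑ i ∈ s, ∫ ω, T i ω ^ 2 ∂P := by
  have hint : ∀ i ∈ s, ∀ j ∈ s, Integrable (fun ω => T i ω * T j ω) P :=
    fun i hi j hj => (hT i hi).integrable_mul (hT j hj)
  simp_rw [sq, Finset.sum_mul_sum]
  rw [integral_finsetSum _ fun i hi => integrable_finsetSum _ (hint i hi)]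
  refine Finset.sum_congr rfl fun i hi => ?_
  rw [integral_finsetSum _ (hint i hi)]
  exact Finset.sum_eq_single_of_mem i hi fun j hj hji => horth i hi j hj hji.symm

theorem ProbabilityTheory.iIndepFun.integral_mul_eq_zero_of_ne {X : ι → Ω → ℝ}
    (hX : iIndepFun X P) (hmeas : ∀ i, Measurable (X i)) {l u v w : ι}
    (hl : ∫ ω, X l ω ∂P = 0) (hu : l ≠ u) (hv : l ≠ v) (hw : l ≠ w) :
    ∫ ω, X l ω * (X u ω * X v ω * X w ω) ∂P = 0 := by
  classical
  have hind : IndepFun (X l) (fun ω => X u ω * X v ω * X w ω) P :=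
    (hX.indepFun_finset {l} {u, v, w} (by simp [hu, hv, hw]) hmeas).comp
      (φ := fun x : ({l} : Finset ι) → ℝ => x ⟨l, by simp⟩)
      (ψ := fun y : ({u, v, w} : Finset ι) → ℝ =>
        y ⟨u, by simp⟩ * y ⟨v, by simp⟩ * y ⟨w, by simp⟩)
      (measurable_pi_apply _) (by fun_prop)
  rw [hind.integral_fun_mul_eq_mul_integral (hmeas l).aestronglyMeasurable
    (by fun_prop), hl, zero_mul]

end Moments

theorem ProbabilityTheory.integral_sq_gaussianReal (μ : ℝ) (v : ℝ≥0) :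
    ∫ x, x ^ 2 ∂gaussianReal μ v = v + μ ^ 2 := by
  have hvar := variance_id_gaussianReal (μ := μ) (v := v)
  rw [variance_eq_sub (memLp_id_gaussianReal' 2 (by simp))] at hvar
  simp only [Pi.pow_apply, id_eq, integral_id_gaussianReal] at hvar
  linarith

theorem Nat.add_mod_ne_self {n k i : ℕ} (hk : 0 < k) (hkn : k < n) (hi : i < n) :
    (i + k) % n ≠ i := by
  intro h
  have hdvd : n ∣ k := Nat.modEq_zero_iff_dvd.1 <|
    Nat.ModEq.add_left_cancel' i (h.trans (Nat.mod_eq_of_lt hi).symm : i + k ≡ i + 0 [MOD n])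
  exact absurd (Nat.le_of_dvd hk hdvd) (by omega)

theorem ProbabilityTheory.tendstoInMeasure_sum_div_of_identDistrib {Ω : Type*}
    [MeasurableSpace Ω] {P : Measure Ω} [IsProbabilityMeasure P] {Y : ℕ → Ω → ℝ}
    (hint : Integrable (Y 0) P) (hindep : Pairwise fun i j => IndepFun (Y i) (Y j) P)
    (hident : ∀ i, IdentDistrib (Y i) (Y 0) P P) :
    TendstoInMeasure P (fun n ω => (∑ i ∈ range n, Y i ω) / n) atTop fun _ => P[Y 0] := by
  refine tendstoInMeasure_of_tendsto_ae (fun n => ?_) ?_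
  · have := fun i => (hident i).aemeasurable_fst
    fun_prop
  · filter_upwards [strong_law_ae Y hint hindep hident] with ω hω
    simpa [smul_eq_mul, inv_mul_eq_div] using hω

section CircularLagSum

variable {Ω : Type*} [MeasurableSpace Ω] {P : Measure Ω} {X : ℕ → Ω → ℝ} {m : ℝ} {k n : ℕ}

def circularLagSum (X : ℕ → Ω → ℝ) (k n : ℕ) (ω : Ω) : ℝ :=
  ∑ i ∈ range n, X i ω * X ((i + k) % n) ω

theorem memLp_circularLagSum (hL4 : ∀ i, MemLp (X i) 4 P) (k n : ℕ) :
    MemLp (circularLagSum X k n) 2 P :=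
  memLp_finsetSum _ fun i _ => (hL4 i).mul_of_four (hL4 _)

/-- Among the indices `i, i + k, j, j + k` (mod `n`) of two distinct lag products, one occurs
exactly once; as `2k < n`, the shift by `k` has no fixed points and no 2-cycles. -/
theorem integral_lagProduct_mul_lagProduct_eq_zero (hX : iIndepFun X P)
    (hmeas : ∀ i, Measurable (X i)) (hmean : ∀ i, ∫ ω, X i ω ∂P = 0) (hk : 0 < k)
    (hkn : 2 * k < n) {i j : ℕ} (hi : i < n) (hj : j < n) (hij : i ≠ j) :
    ∫ ω, X i ω * X ((i + k) % n) ω * (X j ω * X ((j + k) % n) ω) ∂P = 0 := by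
  have hshift : ∀ i < n, (i + k) % n ≠ i := fun i => Nat.add_mod_ne_self hk (by omega)
  have hshift2 : ∀ i < n, ((i + k) % n + k) % n ≠ i := fun i hi => by
    simpa [Nat.mod_add_mod, add_assoc, ← two_mul] using
      Nat.add_mod_ne_self (by omega : 0 < 2 * k) hkn hi
  by_cases hiaj : i = (j + k) % n
  · have hjai : j ≠ (i + k) % n := fun h => hshift2 j hj (by rw [← hiaj, ← h])
    rw [← hX.integral_mul_eq_zero_of_ne hmeas (hmean j) (Ne.symm hij)
      hjai (Ne.symm (hshift j hj))]
    exact integral_congr_ae (ae_of_all _ fun ω => by ring)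
  · rw [← hX.integral_mul_eq_zero_of_ne hmeas (hmean i) (Ne.symm (hshift i hi)) hij hiaj]
    exact integral_congr_ae (ae_of_all _ fun ω => by ring)

theorem integral_circularLagSum_sq (hX : iIndepFun X P) (hmeas : ∀ i, Measurable (X i))
    (hmean : ∀ i, ∫ ω, X i ω ∂P = 0) (hsq : ∀ i, ∫ ω, X i ω ^ 2 ∂P = m)
    (hL4 : ∀ i, MemLp (X i) 4 P) (hk : 0 < k) (hkn : 2 * k < n) :
    ∫ ω, circularLagSum X k n ω ^ 2 ∂P = n * m ^ 2 := by
  have hdiag : ∀ i < n, ∫ ω, (X i ω * X ((i + k) % n) ω) ^ 2 ∂P = m ^ 2 := fun i hi => by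
    have hind := (hX.indepFun (Nat.add_mod_ne_self hk (by omega) hi).symm).comp
      (measurable_id.pow_const 2) (measurable_id.pow_const 2)
    calc ∫ ω, (X i ω * X ((i + k) % n) ω) ^ 2 ∂P
        = ∫ ω, X i ω ^ 2 * X ((i + k) % n) ω ^ 2 ∂P := by simp_rw [mul_pow]
      _ = (∫ ω, X i ω ^ 2 ∂P) * ∫ ω, X ((i + k) % n) ω ^ 2 ∂P :=
        hind.integral_fun_mul_eq_mul_integral (by fun_prop) (by fun_prop)
      _ = m ^ 2 := by rw [hsq, hsq, sq]
  unfold circularLagSum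
  rw [integral_sq_sum_of_orthogonal _ (fun i _ => (hL4 i).mul_of_four (hL4 _))
    fun i hi j hj hij => integral_lagProduct_mul_lagProduct_eq_zero hX hmeas hmean hk hkn
      (mem_range.1 hi) (mem_range.1 hj) hij,
    Finset.sum_congr rfl fun i hi => hdiag i (mem_range.1 hi)]
  simp

theorem tendstoInMeasure_circularLagSum_div [IsProbabilityMeasure P] (hX : iIndepFun X P)
    (hmeas : ∀ i, Measurable (X i)) (hmean : ∀ i, ∫ ω, X i ω ∂P = 0)
    (hsq : ∀ i, ∫ ω, X i ω ^ 2 ∂P = m) (hL4 : ∀ i, MemLp (X i) 4 P) (hk : 0 < k) :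
    TendstoInMeasure P (fun n ω => circularLagSum X k n ω / n) atTop fun _ => 0 := by
  refine tendstoInMeasure_zero_of_integral_sq_tendsto_zero
    (fun n => by simpa [div_pow] using
      (memLp_circularLagSum hL4 k n).integrable_sq.div_const ((n : ℝ) ^ 2)) ?_
  refine (tendsto_const_div_atTop_nhds_zero_nat (m ^ 2)).congr' ?_
  filter_upwards [eventually_gt_atTop (2 * k)] with n hn
  have hn0 : (n : ℝ) ≠ 0 := Nat.cast_ne_zero.2 (by omega)
  simp_rw [div_pow, integral_div, integral_circularLagSum_sq hX hmeas hmean hsq hL4 hk hn]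
  field_simp

end CircularLagSum

/-- Let `(Xᵢ)` be i.i.d. real Gaussian random variables with mean `0` and variance
`σ² > 0`, and fix a lag `k ≥ 1`. Then the normalised circular autocorrelation at
lag `k`, `γₙ = (Σ_{i<n} Xᵢ X_{(i+k) mod n}) / (Σ_{i<n} Xᵢ²)`, converges to `0` in
probability as `n → ∞`. -/
theorem stmt_17 {Ω : Type*} [MeasurableSpace Ω] (P : Measure Ω)
    [IsProbabilityMeasure P] (X : ℕ → Ω → ℝ) (σ : ℝ) (hσ : 0 < σ)
    (hmeas : ∀ i, Measurable (X i))
    (hindep : iIndepFun X P)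
    (hdist : ∀ i, P.map (X i) = gaussianReal 0 (Real.toNNReal (σ ^ 2)))
    (k : ℕ) (hk : 1 ≤ k) :
    TendstoInMeasure P
      (fun (n : ℕ) (ω : Ω) =>
        (∑ i ∈ Finset.range n, X i ω * X ((i + k) % n) ω) /
          ∑ i ∈ Finset.range n, (X i ω) ^ 2)
      atTop (fun _ => (0 : ℝ)) := by
  have hlaw : ∀ i, IdentDistrib (X i) id P (gaussianReal 0 (Real.toNNReal (σ ^ 2))) := fun i =>
    ⟨(hmeas i).aemeasurable, aemeasurable_id, by rw [hdist, Measure.map_id]⟩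
  have hL4 : ∀ i, MemLp (X i) 4 P := fun i =>
    (hlaw i).symm.memLp_snd (memLp_id_gaussianReal' 4 (by simp))
  have hmean : ∀ i, ∫ ω, X i ω ∂P = 0 := fun i => by
    simpa using (hlaw i).integral_eq.trans integral_id_gaussianReal
  have hsq : ∀ i, ∫ ω, X i ω ^ 2 ∂P = σ ^ 2 := fun i => by
    have h := ((hlaw i).comp (measurable_id.pow_const 2)).integral_eq
    simp only [Function.comp_def, id] at h
    rw [h, integral_sq_gaussianReal]
    simp [sq_nonneg]
  have hnum := tendstoInMeasure_circularLagSum_div hindep hmeas hmean hsq hL4 hk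
  have hden := tendstoInMeasure_sum_div_of_identDistrib (Y := fun i ω => X i ω ^ 2)
    ((hL4 0).mono_exponent (by norm_num)).integrable_sq
    (fun i j hij => (hindep.indepFun hij).comp
      (measurable_id.pow_const 2) (measurable_id.pow_const 2))
    fun i => ((hlaw i).trans (hlaw 0).symm).comp (measurable_id.pow_const 2)
  refine (hnum.div_of_tendsto_zero (c := σ ^ 2) (by positivity)
    (by simpa [hsq 0] using hden)).congr' ?_ (ae_eq_refl _)
  filter_upwards [eventually_gt_atTop 0] with n hn
  exact ae_of_all _ fun ω => div_div_div_cancel_right₀ (by positivity) _ _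
end
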